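/- The first moment of the Hamiltonian with respect to the uniform measure on the sphere is ⟨H⟩_0 = ∫ π_ME(z) dμ(z) = (d^{⌊n/2⌋} + d^{⌈n/2⌉})/(d^n + 1). -/

import Mathlib

open scoped BigOperators Classical ComplexOrder
open Finset MeasureTheory

noncomputable section

/-- Indicator (Kronecker delta) that two strings `k, l ∈ (ZMod d)^n` agree on all
positions in `A` (i.e. `k_A = l_A`). -/
def agree {d n : ℕ} (A : Finset (Fin n)) (k l : Fin n → ZMod d) : ℝ :=
  if ∀ j ∈ A, k j = l j then 1 else 0

/-- Purity of a state `z` with respect to the bipartition `(A, Aᶜ)`: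
`π_A(z) = ∑ z_k z_{k'} conj(z_l) conj(z_{l'}) [k'_A = l_A][k_A = l'_A][k_Ā = l_Ā][k'_Ā = l'_Ā]`. -/
def purity {d n : ℕ} [NeZero d] (A : Finset (Fin n)) (z : (Fin n → ZMod d) → ℂ) : ℂ :=
  ∑ k, ∑ k', ∑ l, ∑ l',
    z k * z k' * (starRingEnd ℂ) (z l) * (starRingEnd ℂ) (z l') *
      (agree A k' l : ℂ) * (agree A k l' : ℂ) * (agree Aᶜ k l : ℂ) * (agree Aᶜ k' l' : ℂ)

/-- The potential of multipartite entanglement: the average of the purities over all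
balanced bipartitions (`|A| = ⌊n/2⌋`). -/
def piME {d n : ℕ} [NeZero d] (z : (Fin n → ZMod d) → ℂ) : ℂ :=
  ((n.choose (n / 2) : ℂ))⁻¹ *
    ∑ A ∈ (Finset.univ : Finset (Fin n)).powersetCard (n / 2), purity A z

/-- A pure state of `n` qudits: a normalized vector of Fourier coefficients. -/
def IsPureState {d n : ℕ} [NeZero d] (z : (Fin n → ZMod d) → ℂ) : Prop :=
  ∑ k, ‖z k‖ ^ 2 = 1

instance euclideanComplexMeasurableSpace {ι : Type*} : MeasurableSpace (EuclideanSpace ℂ ι) :=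
  borel _

/-- `μ` is the uniform (unitarily invariant) probability measure on the unit sphere
`{z ∈ ℂ^N : ‖z‖ = 1}`: it is a probability measure carried by the sphere which is
invariant under every unitary transformation. -/
def IsUniformSphereMeasure {d n : ℕ} [NeZero d]
    (μ : Measure (EuclideanSpace ℂ (Fin n → ZMod d))) : Prop :=
  IsProbabilityMeasure μ ∧ μ {z | ‖z‖ ≠ 1} = 0 ∧
    ∀ U : EuclideanSpace ℂ (Fin n → ZMod d) ≃ₗᵢ[ℂ] EuclideanSpace ℂ (Fin n → ZMod d),
      Measure.map U μ = μ

/-- The Hamiltonian `H(z) = π_ME(z)`. -/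
def Hham {d n : ℕ} [NeZero d] (z : EuclideanSpace ℂ (Fin n → ZMod d)) : ℂ :=
  piME (fun k => z k)

/-- The partition function `Z(β) = ∫ e^{-β H(z)} dμ(z)`. -/
def Zfun {d n : ℕ} [NeZero d] (μ : Measure (EuclideanSpace ℂ (Fin n → ZMod d))) (β : ℂ) : ℂ :=
  ∫ z, Complex.exp (-β * Hham z) ∂μ

/-!
Expanding the purity as a quartic form in `z` reduces everything to the fourth moments
`E[z_k z_k' conj z_l conj z_l']` of a unitarily invariant probability measure on the unit sphere
of `ℂ^N`, which equal `(δ_lk δ_l'k' + δ_lk' δ_l'k) / (N (N + 1))`. Invariance under a phase on one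
coordinate kills every moment in which `{l, l'}` is not a rearrangement of `{k, k'}`; invariance
under permutations makes `E|z_p|^4` independent of `p`; a real rotation of the `(p, q)`-plane gives
`E|z_p|^2 |z_q|^2 = E|z_p|^4 / 2`; and `‖z‖^4 = 1` then forces `E|z_p|^4 = 2 / (N (N + 1))`.
Contracting the purity of any bipartition against these moments gives
`(d^|A| + d^|Aᶜ|) / (d^n + 1)`, and for balanced bipartitions `|A| = ⌊n/2⌋`, `|Aᶜ| = ⌈n/2⌉`.
-/

open ComplexConjugate

instance euclideanComplexBorelSpace {ι : Type*} : BorelSpace (EuclideanSpace ℂ ι) := ⟨rfl⟩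

theorem Continuous.integrable_of_ae_mem_compact {X G : Type*} [TopologicalSpace X] [T2Space X]
    [MeasurableSpace X] [OpensMeasurableSpace X] [NormedAddCommGroup G] {μ : Measure X}
    [IsFiniteMeasure μ] {K : Set X} {f : X → G} (hf : Continuous f) (hK : IsCompact K)
    (hμK : ∀ᵐ x ∂μ, x ∈ K) : Integrable f μ := by
  rw [← Measure.restrict_eq_self_of_ae_mem hμK]
  exact hf.continuousOn.integrableOn_compact hK

section FourthMoments

variable {ι : Type*} {μ : Measure (EuclideanSpace ℂ ι)}

def quarticMonomial (k k' l l' : ι) (z : EuclideanSpace ℂ ι) : ℂ :=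
  z k * z k' * conj (z l) * conj (z l')

@[fun_prop]
theorem continuous_quarticMonomial (k k' l l' : ι) : Continuous (quarticMonomial k k' l l') := by
  unfold quarticMonomial
  fun_prop

variable (μ) in
def fourthMoment (k k' l l' : ι) : ℂ :=
  ∫ z, quarticMonomial k k' l l' z ∂μ

theorem fourthMoment_comm_left (k k' l l' : ι) :
    fourthMoment μ k k' l l' = fourthMoment μ k' k l l' := by
  unfold fourthMoment quarticMonomial
  congr 1; ext z; ring

theorem fourthMoment_comm_right (k k' l l' : ι) :
    fourthMoment μ k k' l l' = fourthMoment μ k k' l' l := by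
  unfold fourthMoment quarticMonomial
  congr 1; ext z; ring

theorem conj_fourthMoment (k k' l l' : ι) :
    conj (fourthMoment μ k k' l l') = fourthMoment μ l l' k k' := by
  simp only [fourthMoment, ← integral_conj, quarticMonomial, map_mul, Complex.conj_conj]
  congr 1; ext z; ring

variable [Fintype ι]

def IsUnitarilyInvariant (μ : Measure (EuclideanSpace ℂ ι)) : Prop :=
  ∀ U : EuclideanSpace ℂ ι ≃ₗᵢ[ℂ] EuclideanSpace ℂ ι, μ.map U = μ

theorem IsUnitarilyInvariant.integral_comp {G : Type*} [NormedAddCommGroup G] [NormedSpace ℝ G]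
    (hμ : IsUnitarilyInvariant μ) (U : EuclideanSpace ℂ ι ≃ₗᵢ[ℂ] EuclideanSpace ℂ ι)
    (f : EuclideanSpace ℂ ι → G) : ∫ z, f (U z) ∂μ = ∫ z, f z ∂μ := by
  conv_rhs => rw [← hμ U]
  exact (integral_map_equiv U.toHomeomorph.toMeasurableEquiv f).symm

theorem Continuous.integrable_of_ae_norm_eq_one {G : Type*} [NormedAddCommGroup G]
    [IsFiniteMeasure μ] {f : EuclideanSpace ℂ ι → G} (hf : Continuous f)
    (hs : ∀ᵐ z ∂μ, ‖z‖ = 1) : Integrable f μ :=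
  hf.integrable_of_ae_mem_compact (isCompact_sphere 0 1) (by simpa using hs)

theorem EuclideanSpace.sum_mul_conj (z : EuclideanSpace ℂ ι) :
    ∑ k, z k * conj (z k) = (‖z‖ : ℂ) ^ 2 := by
  simp only [Complex.mul_conj, Complex.normSq_eq_norm_sq, ← Complex.ofReal_pow,
    EuclideanSpace.norm_sq_eq, Complex.ofReal_sum]

theorem Complex.sq_norm_add_sq_norm_reflection {c s : ℝ} (hcs : c ^ 2 + s ^ 2 = 1) (x y : ℂ) :
    ‖c * x + s * y‖ ^ 2 + ‖s * x - c * y‖ ^ 2 = ‖x‖ ^ 2 + ‖y‖ ^ 2 := by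
  simp only [Complex.sq_norm, Complex.normSq_apply, Complex.add_re, Complex.add_im,
    Complex.sub_re, Complex.sub_im, Complex.re_ofReal_mul, Complex.im_ofReal_mul]
  linear_combination (x.re ^ 2 + x.im ^ 2 + y.re ^ 2 + y.im ^ 2) * hcs

def planeReflection {p q : ι} (hpq : p ≠ q) {c s : ℝ} (hcs : c ^ 2 + s ^ 2 = 1) :
    EuclideanSpace ℂ ι ≃ₗᵢ[ℂ] EuclideanSpace ℂ ι :=
  LinearIsometry.toLinearIsometryEquiv
    { toFun z := WithLp.toLp 2 fun i =>
        if i = p then c * z p + s * z q else if i = q then s * z p - c * z q else z i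
      map_add' z w := by ext i; simp only [PiLp.add_apply]; split_ifs <;> ring
      map_smul' a z := by
        ext i; simp only [PiLp.smul_apply, smul_eq_mul, RingHom.id_apply]
        split_ifs <;> ring
      norm_map' z := by
        rw [← sq_eq_sq₀ (norm_nonneg _) (norm_nonneg _), EuclideanSpace.norm_sq_eq,
          EuclideanSpace.norm_sq_eq, ← sub_eq_zero, ← Finset.sum_sub_distrib,
          Fintype.sum_eq_add p q hpq fun i hi => by simp [hi.1, hi.2]]
        simp only [LinearMap.coe_mk, AddHom.coe_mk, PiLp.toLp_apply, ↓reduceIte, if_neg hpq.symm]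
        linear_combination Complex.sq_norm_add_sq_norm_reflection hcs (z p) (z q) } rfl

theorem planeReflection_apply_left {p q : ι} (hpq : p ≠ q) {c s : ℝ} (hcs : c ^ 2 + s ^ 2 = 1)
    (z : EuclideanSpace ℂ ι) : planeReflection hpq hcs z p = c * z p + s * z q := by
  simp [planeReflection]

theorem fourthMoment_perm (hμ : IsUnitarilyInvariant μ) (σ : Equiv.Perm ι) (k k' l l' : ι) :
    fourthMoment μ (σ k) (σ k') (σ l) (σ l') = fourthMoment μ k k' l l' := by
  rw [fourthMoment, ← hμ.integral_comp (LinearIsometryEquiv.piLpCongrLeft 2 ℂ ℂ σ)]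
  simp [quarticMonomial, fourthMoment, Equiv.piCongrLeft'_apply]

theorem fourthMoment_diag_eq_diag (hμ : IsUnitarilyInvariant μ) (p q : ι) :
    fourthMoment μ q q q q = fourthMoment μ p p p p := by
  simpa using fourthMoment_perm hμ (Equiv.swap p q) p p p p

theorem fourthMoment_eq_zero_of_ne_of_ne (hμ : IsUnitarilyInvariant μ) {k k' l l' : ι}
    (hlk : l ≠ k) (hlk' : l ≠ k') : fourthMoment μ k k' l l' = 0 := by
  let I : unitary ℂ := ⟨Complex.I, Unitary.mem_iff.2 ⟨by simp, by simp⟩⟩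
  let Φ := LinearIsometryEquiv.piLpCongrRight 2 fun i =>
    Unitary.mulLeft ℂ ℂ (if i = l then I else 1)
  set c : ℂ := -Complex.I * (if l' = l then -Complex.I else 1)
  have hc : c ≠ 1 := by
    simp only [c]; split_ifs <;> norm_num [Complex.ext_iff]
  have h : fourthMoment μ k k' l l' = c * fourthMoment μ k k' l l' := calc
    _ = ∫ z, quarticMonomial k k' l l' (Φ z) ∂μ := (hμ.integral_comp Φ _).symm
    _ = ∫ z, c * quarticMonomial k k' l l' z ∂μ := by
      congr 1; ext z
      simp only [quarticMonomial, Φ, c, I, LinearIsometryEquiv.piLpCongrRight_apply,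
        Unitary.mulLeft_apply, PiLp.toLp_apply, if_neg hlk.symm, if_neg hlk'.symm, if_true]
      by_cases hl' : l' = l
      · subst hl'; simp; ring_nf; simp [Complex.I_sq]
      · simp [hl']; ring
    _ = c * fourthMoment μ k k' l l' := integral_const_mul _ _
  by_contra hne
  exact hc ((mul_eq_right₀ hne).1 h.symm)

theorem fourthMoment_eq_zero (hμ : IsUnitarilyInvariant μ) {k k' l l' : ι}
    (h : ¬(l = k ∧ l' = k' ∨ l = k' ∧ l' = k)) : fourthMoment μ k k' l l' = 0 := by
  by_contra hne
  have hl : l = k ∨ l = k' := by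
    by_contra! h'
    exact hne (fourthMoment_eq_zero_of_ne_of_ne hμ h'.1 h'.2)
  have hl' : l' = k ∨ l' = k' := by
    by_contra! h'
    exact hne (by rw [fourthMoment_comm_right, fourthMoment_eq_zero_of_ne_of_ne hμ h'.1 h'.2])
  have hk : k = l ∨ k = l' := by
    by_contra! h'
    exact hne (by
      rw [← conj_fourthMoment, fourthMoment_eq_zero_of_ne_of_ne hμ h'.1 h'.2, map_zero])
  have hk' : k' = l ∨ k' = l' := by
    by_contra! h'
    exact hne (by rw [← conj_fourthMoment, fourthMoment_comm_right,
      fourthMoment_eq_zero_of_ne_of_ne hμ h'.1 h'.2, map_zero])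
  grind

theorem fourthMoment_pair_of_ne [IsFiniteMeasure μ] (hs : ∀ᵐ z ∂μ, ‖z‖ = 1)
    (hμ : IsUnitarilyInvariant μ) {p q : ι} (hpq : p ≠ q) :
    fourthMoment μ p q p q = fourthMoment μ p p p p / 2 := by
  -- any rotation with both entries nonzero would do; `(3/5, 4/5)` avoids square roots
  have hcs : (3 / 5 : ℝ) ^ 2 + (4 / 5) ^ 2 = 1 := by norm_num
  let v : Fin 2 → ι := ![p, q]
  let w : Fin 2 → ℂ := ![((3 / 5 : ℝ) : ℂ), ((4 / 5 : ℝ) : ℂ)]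
  have hR (z) : quarticMonomial p p p p (planeReflection hpq hcs z) =
      ∑ u : Fin 2 × Fin 2 × Fin 2 × Fin 2, w u.1 * w u.2.1 * w u.2.2.1 * w u.2.2.2 *
        quarticMonomial (v u.1) (v u.2.1) (v u.2.2.1) (v u.2.2.2) z := by
    simp only [quarticMonomial, planeReflection_apply_left, map_add, map_mul,
      Complex.conj_ofReal, Fintype.sum_prod_type, Fin.sum_univ_two, v, w,
      Matrix.cons_val_zero, Matrix.cons_val_one]
    ring
  have h := hμ.integral_comp (planeReflection hpq hcs) (quarticMonomial p p p p)
  simp (disch := exact fun _ _ => Continuous.integrable_of_ae_norm_eq_one (by fun_prop) hs) only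
    [hR, integral_finsetSum, integral_const_mul, ← fourthMoment.eq_1] at h
  simp only [Fintype.sum_prod_type, Fin.sum_univ_two, v, w,
      Matrix.cons_val_zero, Matrix.cons_val_one] at h
  simp (disch := simp [hpq, hpq.symm]) only [fourthMoment_eq_zero hμ] at h
  rw [fourthMoment_comm_right p q q p, fourthMoment_comm_left q p p q,
    fourthMoment_comm_left q p q p, fourthMoment_comm_right p q q p,
    fourthMoment_diag_eq_diag hμ p q] at h
  push_cast at h
  linear_combination (625 / 576) * h

variable [IsProbabilityMeasure μ]

theorem sum_fourthMoment_eq_one (hs : ∀ᵐ z ∂μ, ‖z‖ = 1) :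
    ∑ k, ∑ l, fourthMoment μ k l k l = 1 := by
  have h (z : EuclideanSpace ℂ ι) :
      ∑ k, ∑ l, quarticMonomial k l k l z = (‖z‖ : ℂ) ^ 2 * (‖z‖ : ℂ) ^ 2 := by
    simp only [← EuclideanSpace.sum_mul_conj, Finset.sum_mul_sum, quarticMonomial]
    exact Finset.sum_congr rfl fun k _ => Finset.sum_congr rfl fun l _ => by ring
  calc ∑ k, ∑ l, fourthMoment μ k l k l
      = ∫ z, ∑ k, ∑ l, quarticMonomial k l k l z ∂μ := by
        simp (disch := exact fun _ _ => Continuous.integrable_of_ae_norm_eq_one (by fun_prop) hs)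
          only [integral_finsetSum, fourthMoment]
    _ = ∫ _, (1 : ℂ) ∂μ := integral_congr_ae (by filter_upwards [hs] with z hz; simp [h, hz])
    _ = 1 := by simp

theorem fourthMoment_diag (hs : ∀ᵐ z ∂μ, ‖z‖ = 1) (hμ : IsUnitarilyInvariant μ) (p : ι) :
    fourthMoment μ p p p p = 2 / (Fintype.card ι * (Fintype.card ι + 1)) := by
  set b := fourthMoment μ p p p p
  have h (k l : ι) : fourthMoment μ k l k l = b / 2 + if k = l then b / 2 else 0 := by
    split_ifs with hkl
    · subst hkl; rw [fourthMoment_diag_eq_diag hμ p k]; ring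
    · rw [fourthMoment_pair_of_ne hs hμ hkl, fourthMoment_diag_eq_diag hμ p k]; ring
  have hsum := sum_fourthMoment_eq_one (μ := μ) hs
  simp only [h, Finset.sum_add_distrib, Finset.sum_ite_eq, Finset.mem_univ, if_true,
    Finset.sum_const, Finset.card_univ, nsmul_eq_mul] at hsum
  have hN : (Fintype.card ι : ℂ) ≠ 0 := Nat.cast_ne_zero.2 (Fintype.card_pos_iff.2 ⟨p⟩).ne'
  have hN1 : (Fintype.card ι : ℂ) + 1 ≠ 0 := Nat.cast_add_one_ne_zero _
  field_simp
  linear_combination 2 * hsum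

theorem fourthMoment_eq (hs : ∀ᵐ z ∂μ, ‖z‖ = 1) (hμ : IsUnitarilyInvariant μ) (k k' l l' : ι) :
    fourthMoment μ k k' l l' =
      ((if l = k ∧ l' = k' then 1 else 0) + (if l = k' ∧ l' = k then 1 else 0)) /
        (Fintype.card ι * (Fintype.card ι + 1)) := by
  by_cases h₁ : l = k ∧ l' = k'
  · obtain ⟨rfl, rfl⟩ := h₁
    by_cases hll' : l = l'
    · subst hll'; norm_num [fourthMoment_diag hs hμ]
    · rw [fourthMoment_pair_of_ne hs hμ hll', fourthMoment_diag hs hμ]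
      simp [hll', Ne.symm hll']; field_simp
  by_cases h₂ : l = k' ∧ l' = k
  · obtain ⟨rfl, rfl⟩ := h₂
    have hll' : l' ≠ l := by rintro rfl; exact h₁ ⟨rfl, rfl⟩
    rw [fourthMoment_comm_right, fourthMoment_pair_of_ne hs hμ hll', fourthMoment_diag hs hμ]
    simp [h₁]; field_simp
  simp [h₁, h₂, fourthMoment_eq_zero hμ (not_or.2 ⟨h₁, h₂⟩)]

theorem integral_sum_mul_quarticMonomial (hs : ∀ᵐ z ∂μ, ‖z‖ = 1) (hμ : IsUnitarilyInvariant μ)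
    (W : ι → ι → ι → ι → ℂ) :
    ∫ z, ∑ k, ∑ k', ∑ l, ∑ l', W k k' l l' * quarticMonomial k k' l l' z ∂μ =
      (∑ k, ∑ k', (W k k' k k' + W k k' k' k)) / (Fintype.card ι * (Fintype.card ι + 1)) := by
  simp (disch := exact fun _ _ => Continuous.integrable_of_ae_norm_eq_one (by fun_prop) hs) only
    [integral_finsetSum, integral_const_mul, ← fourthMoment.eq_1, fourthMoment_eq hs hμ]
  simp only [mul_div_assoc', mul_add, ite_and, mul_ite, mul_one, mul_zero, Finset.sum_add_distrib,
    Finset.sum_ite_irrel, Finset.sum_const_zero, Finset.sum_ite_eq', Finset.mem_univ, if_true,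
    ← Finset.sum_div, add_div]

end FourthMoments

section Purity

variable {d n : ℕ}

theorem agree_self (A : Finset (Fin n)) (k : Fin n → ZMod d) : agree A k k = 1 := by
  simp [agree]

theorem agree_comm (A : Finset (Fin n)) (k l : Fin n → ZMod d) : agree A k l = agree A l k := by
  simp only [agree, eq_comm]

theorem agree_mul_self (A : Finset (Fin n)) (k l : Fin n → ZMod d) :
    agree A k l * agree A k l = agree A k l := by
  unfold agree; split_ifs <;> norm_num

theorem sum_agree [NeZero d] (A : Finset (Fin n)) (k : Fin n → ZMod d) :
    ∑ l, agree A k l = (d : ℝ) ^ Aᶜ.card := by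
  have h : ({l | ∀ j ∈ A, k j = l j} : Finset (Fin n → ZMod d)) =
      Fintype.piFinset fun j => if j ∈ A then {k j} else Finset.univ := by
    ext l; simp only [Finset.mem_filter, Finset.mem_univ, true_and, Fintype.mem_piFinset]
    refine forall_congr' fun j => ?_
    split_ifs <;> simp [*, eq_comm]
  simp only [agree, Finset.sum_boole, h, Fintype.card_piFinset, apply_ite Finset.card,
    Finset.card_singleton, Finset.card_univ, ZMod.card, Finset.prod_ite, Finset.prod_const_one,
    one_mul, Finset.prod_const, Finset.filter_not, Finset.filter_mem_eq_inter, Finset.univ_inter,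
    ← Finset.compl_eq_univ_sdiff]
  push_cast; rfl

theorem purity_eq_sum [NeZero d] (A : Finset (Fin n)) (z : EuclideanSpace ℂ (Fin n → ZMod d)) :
    purity A (fun k => z k) = ∑ k, ∑ k', ∑ l, ∑ l',
      ((agree A k' l * agree A k l' * agree Aᶜ k l * agree Aᶜ k' l' : ℝ) : ℂ) *
        quarticMonomial k k' l l' z := by
  unfold purity quarticMonomial
  push_cast
  ac_rfl

theorem integral_purity [NeZero d] {μ : Measure (EuclideanSpace ℂ (Fin n → ZMod d))}
    [IsProbabilityMeasure μ] (hs : ∀ᵐ z ∂μ, ‖z‖ = 1) (hμ : IsUnitarilyInvariant μ)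
    (A : Finset (Fin n)) :
    ∫ z, purity A (fun k => z k) ∂μ =
      ((d : ℂ) ^ A.card + (d : ℂ) ^ Aᶜ.card) / ((d : ℂ) ^ n + 1) := by
  simp only [purity_eq_sum, integral_sum_mul_quarticMonomial hs hμ]
  have hW (k k' : Fin n → ZMod d) :
      agree A k' k * agree A k k' * agree Aᶜ k k * agree Aᶜ k' k' +
        agree A k' k' * agree A k k * agree Aᶜ k k' * agree Aᶜ k' k =
          agree A k k' + agree Aᶜ k k' := by
    simp only [agree_self, agree_comm A k' k, agree_comm Aᶜ k' k, agree_mul_self, mul_one,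
      one_mul]
  simp only [← Complex.ofReal_add, hW, ← Complex.ofReal_sum, Finset.sum_add_distrib, sum_agree,
    compl_compl, Finset.sum_const, Finset.card_univ, nsmul_eq_mul, Fintype.card_fun, ZMod.card,
    Fintype.card_fin]
  have hN : (d : ℂ) ^ n ≠ 0 := pow_ne_zero _ (Nat.cast_ne_zero.2 (NeZero.ne d))
  push_cast
  field_simp
  ring

end Purity

theorem first_moment_general (d n : ℕ) [NeZero d]
    (μ : Measure (EuclideanSpace ℂ (Fin n → ZMod d))) (hμ : IsUniformSphereMeasure μ) :
    ∫ z, Hham z ∂μ =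
      ((d : ℂ) ^ (n / 2) + (d : ℂ) ^ ((n + 1) / 2)) / ((d : ℂ) ^ n + 1) := by
  obtain ⟨hprob, hsphere, hinv⟩ := hμ
  have hs : ∀ᵐ z ∂μ, ‖z‖ = 1 := ae_iff.2 hsphere
  have hA : ∀ A ∈ (Finset.univ : Finset (Fin n)).powersetCard (n / 2),
      ∫ z, purity A (fun k => z k) ∂μ =
        ((d : ℂ) ^ (n / 2) + (d : ℂ) ^ ((n + 1) / 2)) / ((d : ℂ) ^ n + 1) := by
    intro A hA
    rw [integral_purity hs hinv, Finset.card_compl, Fintype.card_fin,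
      (Finset.mem_powersetCard.1 hA).2, show n - n / 2 = (n + 1) / 2 by omega]
  have hchoose : (n.choose (n / 2) : ℂ) ≠ 0 :=
    Nat.cast_ne_zero.2 (Nat.choose_pos (Nat.div_le_self n 2)).ne'
  simp only [Hham, piME]
  rw [integral_const_mul, integral_finsetSum _ fun A _ =>
      Continuous.integrable_of_ae_norm_eq_one (by unfold purity; fun_prop) hs,
    Finset.sum_congr rfl hA, Finset.sum_const, Finset.card_powersetCard, Finset.card_univ,
    Fintype.card_fin, nsmul_eq_mul, inv_mul_cancel_left₀ hchoose]

/-- The first moment of the Hamiltonian with respect to the uniform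
measure on the sphere is `⟨H⟩_0 = ∫ π_ME dμ = (d^{⌊n/2⌋} + d^{⌈n/2⌉})/(d^n + 1)`. -/
theorem first_moment (d n : ℕ) [NeZero d] (hd : 2 ≤ d) (hn : 1 ≤ n)
    (μ : Measure (EuclideanSpace ℂ (Fin n → ZMod d))) (hμ : IsUniformSphereMeasure μ) :
    ∫ z, Hham z ∂μ =
      ((d : ℂ) ^ (n / 2) + (d : ℂ) ^ ((n + 1) / 2)) / ((d : ℂ) ^ n + 1) :=
  first_moment_general d n μ hμ
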